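/- Let r be a nonzero integer. There is an injective group homomorphism μ from H_r to Γ_r determined by μ(g₁) = ((1,0), 0), μ(g₂) = ((0,1), 0), μ(g₃) = ((0,0), 1); it satisfies μ(g₁^{l₁} g₂^{l₂} g₃^{l₃}) = ((l₁,l₂), l₃ + l₁ l₂ r/2) for all integers l₁, l₂, l₃. -/

import Mathlib

/-- `ℤ[r/2]`: the additive subgroup of `ℚ` generated by `1` and `r/2`;
it equals `ℤ` if `r` is even and `(1/2)ℤ` if `r` is odd. -/
def Zr (r : ℤ) : AddSubgroup ℚ := AddSubgroup.closure {1, (r : ℚ) / 2}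

lemma intCast_mem_Zr (r n : ℤ) : (n : ℚ) ∈ Zr r := by
  have h1 : (1 : ℚ) ∈ Zr r := AddSubgroup.subset_closure (by simp)
  simpa using AddSubgroup.zsmul_mem _ h1 n

lemma half_mul_intCast_mem_Zr (r n : ℤ) : (r : ℚ) / 2 * (n : ℚ) ∈ Zr r := by
  have h1 : (r : ℚ) / 2 ∈ Zr r := AddSubgroup.subset_closure (by simp)
  have := AddSubgroup.zsmul_mem _ h1 n
  simpa [zsmul_eq_mul, mul_comm] using this

/-- The group `Γ_r`, with underlying set `ℤ² × ℤ[r/2]` and multiplication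
`(ζ, y)(ζ', y') = (ζ + ζ', y + y' + (r/2) det(ζ, ζ'))`. -/
@[ext]
structure GammaR (r : ℤ) where
  zeta : Fin 2 → ℤ
  y : ℚ
  hy : y ∈ Zr r

namespace GammaR

variable {r : ℤ}

instance : Mul (GammaR r) :=
  ⟨fun a b =>
    ⟨a.zeta + b.zeta,
     a.y + b.y + (r : ℚ) / 2 * ((a.zeta 0 * b.zeta 1 - a.zeta 1 * b.zeta 0 : ℤ) : ℚ),
     add_mem (add_mem a.hy b.hy) (half_mul_intCast_mem_Zr r _)⟩⟩

instance : One (GammaR r) := ⟨⟨0, 0, zero_mem _⟩⟩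

instance : Inv (GammaR r) := ⟨fun a => ⟨-a.zeta, -a.y, neg_mem a.hy⟩⟩

@[simp] lemma mul_zeta (a b : GammaR r) : (a * b).zeta = a.zeta + b.zeta := rfl
@[simp] lemma mul_y (a b : GammaR r) :
    (a * b).y = a.y + b.y + (r : ℚ) / 2 *
      ((a.zeta 0 * b.zeta 1 - a.zeta 1 * b.zeta 0 : ℤ) : ℚ) := rfl
@[simp] lemma one_zeta : (1 : GammaR r).zeta = 0 := rfl
@[simp] lemma one_y : (1 : GammaR r).y = 0 := rfl
@[simp] lemma inv_zeta (a : GammaR r) : a⁻¹.zeta = -a.zeta := rfl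
@[simp] lemma inv_y (a : GammaR r) : a⁻¹.y = -a.y := rfl

instance : Group (GammaR r) where
  mul_assoc a b c := by
    ext
    · simp [add_assoc]
    · simp only [mul_y, mul_zeta, Pi.add_apply]
      push_cast
      ring
  one_mul a := by ext <;> simp
  mul_one a := by ext <;> simp
  inv_mul_cancel a := by
    ext
    · simp
    · simp only [mul_y, inv_y, inv_zeta, Pi.neg_apply, one_y]
      push_cast
      ring

/-- The element `((l₁,l₂), l₃ + l₁l₂r/2)` of `Γ_r`. -/
def elt (r l1 l2 l3 : ℤ) : GammaR r :=
  ⟨![l1, l2], (l3 : ℚ) + (l1 : ℚ) * (l2 : ℚ) * (r : ℚ) / 2, by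
    have h1 := intCast_mem_Zr r l3
    have h2 := half_mul_intCast_mem_Zr r (l1 * l2)
    have : (l3 : ℚ) + (r : ℚ) / 2 * ((l1 * l2 : ℤ) : ℚ) ∈ Zr r := add_mem h1 h2
    convert this using 1
    push_cast
    ring⟩

end GammaR

/-- The relations of the group `H_r`: generators `g₁,g₂,g₃` (indexed by `Fin 3`) and
relations `g₁g₂g₁⁻¹g₂⁻¹ = g₃^{r}`, `g₁g₃ = g₃g₁`, `g₂g₃ = g₃g₂`. -/
def hRels (r : ℤ) : Set (FreeGroup (Fin 3)) :=
  { FreeGroup.of 0 * FreeGroup.of 1 * (FreeGroup.of 0)⁻¹ * (FreeGroup.of 1)⁻¹ *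
      ((FreeGroup.of 2) ^ r)⁻¹,
    FreeGroup.of 0 * FreeGroup.of 2 * (FreeGroup.of 0)⁻¹ * (FreeGroup.of 2)⁻¹,
    FreeGroup.of 1 * FreeGroup.of 2 * (FreeGroup.of 1)⁻¹ * (FreeGroup.of 2)⁻¹ }

/-- The group `H_r`. -/
abbrev Hr (r : ℤ) := PresentedGroup (hRels r)

/-! In `Γ_r` the elements `elt r a b c = ((a,b), c + abr/2)` multiply by the rule
`elt(a,b,c) · elt(d,e,f) = elt(a+d, b+e, c+f-rbd)`, so the images of the generators satisfy the
relations of `H_r`. The words `g₁^a g₂^b g₃^c` of `H_r` multiply by the same rule, because `g₃` is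
central and `g₂^b g₁^d = g₁^d g₂^b g₃^(-rbd)`; hence they form a subgroup, which contains the
generators and so is all of `H_r`. Since `μ` sends such a word to `elt r a b c`, which determines
`(a, b, c)`, `μ` is injective. -/

theorem zpow_mul_zpow_eq_of_mul_eq {G : Type*} [Group G] {x y z : G}
    (hxz : Commute x z) (hyz : Commute y z) (h : x * y = y * x * z) (m n : ℤ) :
    x ^ m * y ^ n = y ^ n * x ^ m * z ^ (m * n) := by
  have hy : SemiconjBy y (x * z) x := by
    rw [SemiconjBy, ← mul_assoc, h]
  have hxm : SemiconjBy (x ^ m) y (y * z ^ m) := by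
    have := hy.zpow_right m
    rw [SemiconjBy, hxz.mul_zpow] at this
    rw [SemiconjBy, mul_assoc, ← (hxz.zpow_zpow m m).eq, ← this]
  rw [hxm.zpow_right n, (hyz.zpow_right m).mul_zpow, ← zpow_mul, mul_comm m n, mul_assoc,
    ← (hxz.zpow_zpow m (n * m)).eq, mul_assoc]

theorem PresentedGroup.commute_of_mem {α : Type*} {rels : Set (FreeGroup α)} {i j : α}
    (h : FreeGroup.of i * FreeGroup.of j * (FreeGroup.of i)⁻¹ * (FreeGroup.of j)⁻¹ ∈ rels) :
    Commute (of i : PresentedGroup rels) (of j) := by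
  rw [← commutatorElement_eq_one_iff_commute, commutatorElement_def]
  have := PresentedGroup.one_of_mem h
  simp only [map_mul, map_inv] at this
  exact this

namespace GammaR

variable {r : ℤ}

theorem elt_mul (a b c d e f : ℤ) :
    elt r a b c * elt r d e f = elt r (a + d) (b + e) (c + f - r * b * d) := by
  ext i
  · fin_cases i <;> simp [elt]
  · simp only [mul_y, elt, Matrix.cons_val_zero, Matrix.cons_val_one]
    push_cast
    ring

theorem elt_zero : elt r 0 0 0 = 1 := by
  ext i
  · fin_cases i <;> simp [elt]
  · simp [elt]

theorem elt_inv (a b c : ℤ) : (elt r a b c)⁻¹ = elt r (-a) (-b) (-c - r * a * b) := by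
  rw [inv_eq_iff_mul_eq_one, elt_mul, ← elt_zero]
  congr 1 <;> ring

theorem elt_zpow_of_mul_eq_zero {a b : ℤ} (hab : a * b = 0) (c n : ℤ) :
    elt r a b c ^ n = elt r (n * a) (n * b) (n * c) := by
  induction n using Int.induction_on with
  | zero => simp [← elt_zero]
  | succ n ih =>
    rw [zpow_add_one, ih, elt_mul]
    congr 1
    · ring
    · ring
    · linear_combination (-r * n) * hab
  | pred n ih =>
    rw [zpow_sub_one, ih, elt_inv, elt_mul]
    congr 1
    · ring
    · ring
    · linear_combination (-r * n - r) * hab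

theorem elt_inj {a b c a' b' c' : ℤ} :
    elt r a b c = elt r a' b' c' ↔ a = a' ∧ b = b' ∧ c = c' := by
  refine ⟨fun h => ?_, fun ⟨ha, hb, hc⟩ => ha ▸ hb ▸ hc ▸ rfl⟩
  have ha : a = a' := by simpa [elt] using congrArg (·.zeta 0) h
  have hb : b = b' := by simpa [elt] using congrArg (·.zeta 1) h
  subst ha hb
  have hy := congrArg GammaR.y h
  simp only [elt, add_left_inj, Int.cast_inj] at hy
  exact ⟨rfl, rfl, hy⟩

end GammaR

namespace Hr

variable {r : ℤ}

local notation "g₁" => (PresentedGroup.of 0 : Hr r)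
local notation "g₂" => (PresentedGroup.of 1 : Hr r)
local notation "g₃" => (PresentedGroup.of 2 : Hr r)

theorem of_zero_mul_of_one_mul_inv_mul_inv : g₁ * g₂ * g₁⁻¹ * g₂⁻¹ = g₃ ^ r := by
  have h := PresentedGroup.one_of_mem (show _ ∈ hRels r from Set.mem_insert _ _)
  simp only [map_mul, map_inv, map_zpow, mul_inv_eq_one] at h
  exact h

theorem of_two_mem_center : g₃ ∈ Subgroup.center (Hr r) := by
  rw [Subgroup.mem_center_iff]
  suffices ∀ x, x ∈ Subgroup.centralizer {g₃} from
    fun x => Subgroup.mem_centralizer_singleton_iff.mp (this x)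
  refine PresentedGroup.generated_by _ _ fun j => Subgroup.mem_centralizer_singleton_iff.mpr ?_
  fin_cases j
  · exact (PresentedGroup.commute_of_mem (Or.inr (Or.inl rfl))).eq
  · exact (PresentedGroup.commute_of_mem (Or.inr (Or.inr rfl))).eq
  · rfl

theorem commute_of_two (x : Hr r) (n : ℤ) : Commute x (g₃ ^ n) :=
  Commute.zpow_right (Subgroup.mem_center_iff.mp of_two_mem_center x) n

theorem of_one_mul_of_zero : g₂ * g₁ = g₁ * g₂ * g₃ ^ (-r) := by
  rw [(commute_of_two (g₁ * g₂) (-r)).eq, zpow_neg, ← of_zero_mul_of_one_mul_inv_mul_inv]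
  group

theorem zpow_of_one_mul_zpow_of_zero (b d : ℤ) :
    g₂ ^ b * g₁ ^ d = g₁ ^ d * g₂ ^ b * g₃ ^ (-r * (b * d)) := by
  rw [zpow_mul_zpow_eq_of_mul_eq (commute_of_two _ _) (commute_of_two _ _) of_one_mul_of_zero,
    ← zpow_mul]

theorem normalForm_mul (a b c d e f : ℤ) :
    g₁ ^ a * g₂ ^ b * g₃ ^ c * (g₁ ^ d * g₂ ^ e * g₃ ^ f) =
      g₁ ^ (a + d) * g₂ ^ (b + e) * g₃ ^ (c + f - r * b * d) := calc
  _ = g₁ ^ a * (g₂ ^ b * g₁ ^ d) * g₂ ^ e * g₃ ^ (c + f) := by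
    rw [mul_assoc _ (g₃ ^ c), ← mul_assoc (g₃ ^ c), ← (commute_of_two (g₁ ^ d * g₂ ^ e) c).eq]
    group
  _ = g₁ ^ a * g₁ ^ d * g₂ ^ b * (g₃ ^ (-r * (b * d)) * g₂ ^ e) * g₃ ^ (c + f) := by
    rw [zpow_of_one_mul_zpow_of_zero]
    group
  _ = g₁ ^ (a + d) * g₂ ^ (b + e) * g₃ ^ (c + f - r * b * d) := by
    rw [← (commute_of_two (g₂ ^ e) _).eq]
    group

theorem exists_normalForm (x : Hr r) : ∃ a b c : ℤ, g₁ ^ a * g₂ ^ b * g₃ ^ c = x := by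
  let normalForms : Subgroup (Hr r) :=
    { carrier := {x | ∃ a b c : ℤ, g₁ ^ a * g₂ ^ b * g₃ ^ c = x}
      one_mem' := ⟨0, 0, 0, by simp⟩
      mul_mem' := by
        rintro _ _ ⟨a, b, c, rfl⟩ ⟨d, e, f, rfl⟩
        exact ⟨_, _, _, (normalForm_mul a b c d e f).symm⟩
      inv_mem' := by
        rintro _ ⟨a, b, c, rfl⟩
        refine ⟨-a, -b, -c - r * a * b, eq_inv_of_mul_eq_one_right ?_⟩
        rw [normalForm_mul, add_neg_cancel, add_neg_cancel,
          show c + (-c - r * a * b) - r * b * -a = 0 by ring]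
        simp }
  refine PresentedGroup.generated_by _ normalForms (fun j => ?_) x
  fin_cases j
  · exact ⟨1, 0, 0, by simp⟩
  · exact ⟨0, 1, 0, by simp⟩
  · exact ⟨0, 0, 1, by simp⟩

theorem lift_elt_eq_one_of_mem_hRels {w : FreeGroup (Fin 3)} (hw : w ∈ hRels r) :
    FreeGroup.lift ![GammaR.elt r 1 0 0, GammaR.elt r 0 1 0, GammaR.elt r 0 0 1] w = 1 := by
  rcases hw with rfl | rfl | rfl <;>
  simp only [map_mul, map_inv, map_zpow, FreeGroup.lift_apply_of, Matrix.cons_val_zero,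
    Matrix.cons_val_one, Matrix.cons_val_two, Matrix.head_cons, Matrix.tail_cons,
    GammaR.elt_zpow_of_mul_eq_zero (mul_zero 0), GammaR.elt_inv, GammaR.elt_mul] <;>
  rw [← GammaR.elt_zero] <;> congr 1 <;> ring

variable (r) in
def toGammaR : Hr r →* GammaR r := PresentedGroup.toGroup fun _ => lift_elt_eq_one_of_mem_hRels

theorem toGammaR_of (i : Fin 3) :
    toGammaR r (PresentedGroup.of i) =
      ![GammaR.elt r 1 0 0, GammaR.elt r 0 1 0, GammaR.elt r 0 0 1] i :=
  PresentedGroup.toGroup.of _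

theorem toGammaR_normalForm (a b c : ℤ) :
    toGammaR r (g₁ ^ a * g₂ ^ b * g₃ ^ c) = GammaR.elt r a b c := by
  rw [map_mul, map_mul, map_zpow, map_zpow, map_zpow, toGammaR_of, toGammaR_of, toGammaR_of]
  simp only [Matrix.cons_val_zero, Matrix.cons_val_one, Matrix.cons_val_two, Matrix.head_cons,
    Matrix.tail_cons, GammaR.elt_zpow_of_mul_eq_zero (mul_zero _),
    GammaR.elt_zpow_of_mul_eq_zero (zero_mul _), GammaR.elt_mul]
  congr 1 <;> ring

theorem toGammaR_injective : Function.Injective (toGammaR r) := by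
  intro x y hxy
  obtain ⟨a, b, c, rfl⟩ := exists_normalForm x
  obtain ⟨a', b', c', rfl⟩ := exists_normalForm y
  rw [toGammaR_normalForm, toGammaR_normalForm, GammaR.elt_inj] at hxy
  obtain ⟨rfl, rfl, rfl⟩ := hxy
  rfl

end Hr

theorem stmt_5_general (r : ℤ) :
    ∃ μ : Hr r →* GammaR r,
      Function.Injective μ ∧
      μ (PresentedGroup.of 0) = GammaR.elt r 1 0 0 ∧
      μ (PresentedGroup.of 1) = GammaR.elt r 0 1 0 ∧
      μ (PresentedGroup.of 2) = GammaR.elt r 0 0 1 ∧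
      ∀ l1 l2 l3 : ℤ,
        μ ((PresentedGroup.of 0 : Hr r) ^ l1 * PresentedGroup.of 1 ^ l2 *
            PresentedGroup.of 2 ^ l3) = GammaR.elt r l1 l2 l3 :=
  ⟨Hr.toGammaR r, Hr.toGammaR_injective, Hr.toGammaR_of 0, Hr.toGammaR_of 1, Hr.toGammaR_of 2,
    Hr.toGammaR_normalForm⟩

/-- There is an injective group homomorphism `μ : H_r → Γ_r` determined by
`μ(g₁) = ((1,0),0)`, `μ(g₂) = ((0,1),0)`, `μ(g₃) = ((0,0),1)`; it satisfies
`μ(g₁^{l₁}g₂^{l₂}g₃^{l₃}) = ((l₁,l₂), l₃ + l₁l₂r/2)` for all integers `l₁,l₂,l₃`. -/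
theorem stmt_5 (r : ℤ) (hr : r ≠ 0) :
    ∃ μ : Hr r →* GammaR r,
      Function.Injective μ ∧
      μ (PresentedGroup.of 0) = GammaR.elt r 1 0 0 ∧
      μ (PresentedGroup.of 1) = GammaR.elt r 0 1 0 ∧
      μ (PresentedGroup.of 2) = GammaR.elt r 0 0 1 ∧
      ∀ l1 l2 l3 : ℤ,
        μ ((PresentedGroup.of 0 : Hr r) ^ l1 * PresentedGroup.of 1 ^ l2 *
            PresentedGroup.of 2 ^ l3) = GammaR.elt r l1 l2 l3 :=
  stmt_5_general r
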